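/- Let g = (√5−1)/2 and suppose g < α ≤ 1. Define φ_α(x) = 1/|x| − d_α(x) where d_α(x) = 2⌊1/(2|x|) + (1−α)/2⌋ + 1. Then −1/(3+α) < φ_α(α−2) ≤ 0 ≤ φ_α(α) < 1/(1+α), where φ_α(α) is interpreted as 1/α − 1 and φ_α(α−2) as 1/(2−α) − 1. -/

import Mathlib

/-! Everything reduces to `α (1 + α) > 1`, which for positive `α` is exactly the condition
`α > (√5 - 1)/2`: both strict inequalities clear denominators to `α² + α - 1 > 0`, and the
two middle ones only need `0 < α ≤ 1`. -/

lemma one_lt_mul_one_add_of_sqrt_five_sub_one_div_two_lt {α : ℝ} (h : (√5 - 1) / 2 < α) :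
    1 < α * (1 + α) := by
  have hsq : √5 ^ 2 = 5 := Real.sq_sqrt (by norm_num)
  have hpos : 0 < α + (√5 + 1) / 2 := by linarith [Real.sqrt_nonneg 5]
  -- `α² + α - 1` factors as `(α - (√5 - 1)/2) (α + (√5 + 1)/2)`
  nlinarith [mul_pos (sub_pos.mpr h) hpos]

lemma one_div_sub_one_lt_one_div_one_add {α : ℝ} (hα : 0 < α) (h : 1 < α * (1 + α)) :
    1 / α - 1 < 1 / (1 + α) := by
  rw [div_sub' hα.ne', div_lt_div_iff₀ hα (by linarith)]
  linarith

lemma neg_one_div_three_add_lt_one_div_two_sub_sub_one {α : ℝ} (hα : 0 < α) (hα2 : α < 2)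
    (h : 1 < α * (1 + α)) : -1 / (3 + α) < 1 / (2 - α) - 1 := by
  rw [div_sub' (sub_pos.mpr hα2).ne', div_lt_div_iff₀ (by linarith) (sub_pos.mpr hα2)]
  linarith

theorem stmt1 (α : ℝ) (h1 : (Real.sqrt 5 - 1)/2 < α) (h2 : α ≤ 1) :
    -1/(3+α) < 1/(2-α) - 1 ∧ 1/(2-α) - 1 ≤ 0 ∧ (0:ℝ) ≤ 1/α - 1 ∧
      1/α - 1 < 1/(1+α) := by
  have hkey := one_lt_mul_one_add_of_sqrt_five_sub_one_div_two_lt h1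
  have hα : 0 < α := by linarith [Real.one_le_sqrt.mpr (by norm_num : (1 : ℝ) ≤ 5)]
  refine ⟨neg_one_div_three_add_lt_one_div_two_sub_sub_one hα (by linarith) hkey, ?_, ?_,
    one_div_sub_one_lt_one_div_one_add hα hkey⟩
  · rw [sub_nonpos, div_le_one₀ (by linarith)]
    linarith
  · rw [sub_nonneg, le_div_iff₀ hα]
    linarith
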